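/- arXiv:2602.16982 — 3 statements merged into one kernel-verified Lean document; each statement's English description precedes it below -/
import Mathlib

section
/- Let λ > 0 be a positive real number and t₀ > 0. If y : [t₀, ∞) → ℝ is twice continuously differentiable and satisfies the modal equation y''(t) + (3/t) y'(t) + λ y(t) = 0 for all t ≥ t₀, then there exists a constant C ≥ 0 such that |y(t)| ≤ C · t^{-3/2} for all t ≥ t₀; in particular y(t) → 0 as t → ∞. -/
/-!
With `u = t ^ (3/2) * y` the equation becomes `u'' + (lam - 3 / (4 t²)) u = 0`, so the energy
`E = u'² + lam u²` satisfies `E' = 3 u u' / (2 t²) ≤ c E / t²` with `c = 3 / (4 √lam)` by AM-GM.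
Hence `E(t) exp(c / t)` is nonincreasing, and `lam t³ y² = lam u² ≤ E` stays bounded.
-/

open Filter

/-- The modal equation: `y` is a twice continuously differentiable solution with
derivative `y'` of `y'' + (3/t) y' + lam · y = 0` on `[t₀, ∞)`. -/
def IsModalSolution (lam t₀ : ℝ) (y y' : ℝ → ℝ) : Prop :=
  (∀ t, t₀ ≤ t → HasDerivAt y (y' t) t) ∧
  (∀ t, t₀ ≤ t → HasDerivAt y' (-(3 / t) * y' t - lam * y t) t)

open Real Set

theorem antitoneOn_mul_exp_div_of_deriv_le {F F' : ℝ → ℝ} {a c : ℝ} (ha : 0 < a)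
    (hF : ∀ t, a ≤ t → HasDerivAt F (F' t) t) (hF' : ∀ t, a ≤ t → F' t ≤ c / t ^ 2 * F t) :
    AntitoneOn (fun t => F t * exp (c / t)) (Ici a) := by
  have hG : ∀ t, a ≤ t → HasDerivAt (fun t => F t * exp (c / t))
      (exp (c / t) * (F' t - c / t ^ 2 * F t)) t := by
    intro t ht
    have ht0 : t ≠ 0 := (ha.trans_le ht).ne'
    have hdiv : HasDerivAt (fun x => c / x) (-c / t ^ 2) t := by
      simpa [div_eq_mul_inv, neg_div] using (hasDerivAt_inv ht0).const_mul c
    exact ((hF t ht).mul hdiv.exp).congr_deriv (by ring)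
  refine antitoneOn_of_deriv_nonpos (convex_Ici a)
    (fun t ht => (hG t ht).continuousAt.continuousWithinAt) (fun t ht => ?_) (fun t ht => ?_)
  all_goals rw [interior_Ici] at ht
  · exact (hG t ht.le).differentiableAt.differentiableWithinAt
  · rw [(hG t ht.le).deriv]
    exact mul_nonpos_of_nonneg_of_nonpos (exp_pos _).le (sub_nonpos.2 (hF' t ht.le))

theorem abs_le_sqrt_div_mul_rpow_of_mul_pow_sq_le {lam K t x : ℝ} (hlam : 0 < lam) (ht : 0 < t)
    (h : lam * t ^ 3 * x ^ 2 ≤ K) : |x| ≤ √(K / lam) * t ^ (-(3 : ℝ) / 2) := by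
  have hrpow : (t ^ (-(3 : ℝ) / 2)) ^ 2 = (t ^ 3)⁻¹ := by
    rw [← rpow_natCast, ← rpow_mul ht.le, ← rpow_natCast t 3, ← rpow_neg ht.le]
    norm_num
  have hK : 0 ≤ K := le_trans (by positivity) h
  refine abs_le_of_sq_le_sq ?_ (by positivity)
  rw [mul_pow, sq_sqrt (by positivity), hrpow, div_mul_eq_mul_div, le_div_iff₀ hlam,
    ← div_eq_mul_inv, le_div_iff₀ (by positivity)]
  linarith

/-- With `u = t ^ (3/2) * y`, this is `u' ^ 2 + lam * u ^ 2`. -/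
noncomputable def modalEnergy (lam : ℝ) (y y' : ℝ → ℝ) (t : ℝ) : ℝ :=
  t * (t * y' t + 3 / 2 * y t) ^ 2 + lam * t ^ 3 * y t ^ 2

section modalEnergy

variable {lam t₀ t : ℝ} {y y' : ℝ → ℝ}

theorem IsModalSolution.hasDerivAt_modalEnergy (h : IsModalSolution lam t₀ y y') (ht : t₀ ≤ t)
    (ht0 : t ≠ 0) :
    HasDerivAt (modalEnergy lam y y') (3 / 2 * y t * (t * y' t + 3 / 2 * y t)) t := by
  have hy := h.1 t ht
  have hy' := h.2 t ht
  have hu := ((hasDerivAt_id t).mul hy').add (hy.const_mul (3 / 2 : ℝ))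
  have hE := ((hasDerivAt_id t).mul (hu.pow 2)).add
    (((hasDerivAt_pow 3 t).const_mul lam).mul (hy.pow 2))
  refine (show HasDerivAt (modalEnergy lam y y') _ t from hE).congr_deriv ?_
  simp only [Pi.add_apply, Pi.mul_apply, Pi.pow_apply, id, Nat.cast_ofNat]
  field_simp
  ring

theorem mul_pow_three_sq_le_modalEnergy (ht : 0 ≤ t) :
    lam * t ^ 3 * y t ^ 2 ≤ modalEnergy lam y y' t :=
  le_add_of_nonneg_left (by positivity)

theorem deriv_modalEnergy_le (hlam : 0 < lam) (ht : 0 < t) :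
    3 / 2 * y t * (t * y' t + 3 / 2 * y t) ≤ 3 / (4 * √lam) / t ^ 2 * modalEnergy lam y y' t := by
  obtain ⟨s, hs, rfl⟩ : ∃ s, 0 < s ∧ s ^ 2 = lam := ⟨√lam, sqrt_pos.2 hlam, sq_sqrt hlam.le⟩
  rw [sqrt_sq hs.le, div_div, div_mul_eq_mul_div (3 : ℝ) (4 * s * t ^ 2),
    le_div_iff₀ (by positivity), modalEnergy]
  nlinarith [mul_nonneg ht.le (sq_nonneg (t * y' t + 3 / 2 * y t - s * t * y t))]

end modalEnergy

/-- for `lam > 0`, every solution of the modal equation on `[t₀, ∞)` (t₀ > 0)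
satisfies `|y(t)| ≤ C t^{-3/2}` for some `C ≥ 0`; in particular `y(t) → 0`. -/
theorem stmt_1 (lam t₀ : ℝ) (hlam : 0 < lam) (ht₀ : 0 < t₀)
    (y y' : ℝ → ℝ) (h : IsModalSolution lam t₀ y y') :
    (∃ C : ℝ, 0 ≤ C ∧ ∀ t, t₀ ≤ t → |y t| ≤ C * t ^ (-(3 : ℝ) / 2)) ∧
    Tendsto y atTop (nhds 0) := by
  set c := 3 / (4 * √lam)
  set K := modalEnergy lam y y' t₀ * exp (c / t₀)
  have hanti := antitoneOn_mul_exp_div_of_deriv_le ht₀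
    (fun t ht => h.hasDerivAt_modalEnergy ht (ht₀.trans_le ht).ne')
    (fun t ht => deriv_modalEnergy_le hlam (ht₀.trans_le ht))
  have hbound : ∀ t, t₀ ≤ t → |y t| ≤ √(K / lam) * t ^ (-(3 : ℝ) / 2) := by
    intro t ht
    have htpos := ht₀.trans_le ht
    have hE := mul_pow_three_sq_le_modalEnergy (lam := lam) (y := y) (y' := y') htpos.le
    refine abs_le_sqrt_div_mul_rpow_of_mul_pow_sq_le hlam htpos ?_
    calc lam * t ^ 3 * y t ^ 2 ≤ modalEnergy lam y y' t := hE
      _ ≤ modalEnergy lam y y' t * exp (c / t) :=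
          le_mul_of_one_le_right (le_trans (by positivity) hE) (one_le_exp (by positivity))
      _ ≤ K := hanti self_mem_Ici ht ht
  have hdecay : Tendsto (fun t : ℝ => √(K / lam) * t ^ (-(3 : ℝ) / 2)) atTop (nhds 0) := by
    simpa [neg_div] using
      (tendsto_rpow_neg_atTop (by norm_num : (0 : ℝ) < 3 / 2)).const_mul √(K / lam)
  refine ⟨⟨_, sqrt_nonneg _, hbound⟩, squeeze_zero_norm' ?_ hdecay⟩
  filter_upwards [eventually_ge_atTop t₀] with t ht using hbound t ht
end

section
/- Let λ = -μ² < 0 with μ > 0, and let t₀ > 0. Consider real solutions of the modal equation y''(t) + (3/t) y'(t) + λ y(t) = 0 on [t₀, ∞). There exists a linear subspace L ⊆ ℝ² of dimension at most 1 such that for every initial condition (y(t₀), y'(t₀)) ∈ ℝ² \ L, the corresponding solution satisfies: for every μ' < μ, e^{-μ' t} |y(t)| → ∞ as t → ∞ (exponential growth at rate μ). -/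
/-!
Substituting `v = t^{3/2} y` turns the modal equation into `v'' = q v` with
`q = μ² + 3/(4t²)`. For such `v` and `z = v' + μ v`, the product `v z` is nondecreasing.
If it ever becomes positive, `v` keeps its sign from then on, `e^{-μt} z` is nondecreasing, and
`|v|` grows like `e^{μt}`. Otherwise `(e^{μt} v)²` is nonincreasing, and since `q - μ² = O(t⁻²)`
is integrable, `e^{μt} (v' - μ v)` stays bounded too. The Wronskian of two such recessive
solutions is constant and `O(e^{-2μt})`, hence zero: the initial data of the solutions that
do not grow lie on one line.
-/

open Filter

open Set Real

theorem monotoneOn_Ici_of_hasDerivAt_nonneg {f f' : ℝ → ℝ} {a : ℝ}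
    (hf : ∀ t ≥ a, HasDerivAt f (f' t) t) (hf' : ∀ t ≥ a, 0 ≤ f' t) :
    MonotoneOn f (Ici a) :=
  monotoneOn_of_hasDerivWithinAt_nonneg (convex_Ici a)
    (fun t ht => (hf t ht).continuousAt.continuousWithinAt)
    (fun t ht => (hf t (interior_subset ht)).hasDerivWithinAt)
    (fun t ht => hf' t (interior_subset ht))

theorem antitoneOn_Ici_of_hasDerivAt_nonpos {f f' : ℝ → ℝ} {a : ℝ}
    (hf : ∀ t ≥ a, HasDerivAt f (f' t) t) (hf' : ∀ t ≥ a, f' t ≤ 0) :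
    AntitoneOn f (Ici a) :=
  antitoneOn_of_hasDerivWithinAt_nonpos (convex_Ici a)
    (fun t ht => (hf t ht).continuousAt.continuousWithinAt)
    (fun t ht => (hf t (interior_subset ht)).hasDerivWithinAt)
    (fun t ht => hf' t (interior_subset ht))

theorem abs_sub_le_of_abs_hasDerivAt_le {f f' F F' : ℝ → ℝ} {a : ℝ}
    (hf : ∀ t ≥ a, HasDerivAt f (f' t) t) (hF : ∀ t ≥ a, HasDerivAt F (F' t) t)
    (h : ∀ t ≥ a, |f' t| ≤ F' t) {t : ℝ} (ht : a ≤ t) :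
    |f t - f a| ≤ F t - F a := by
  have hsub := monotoneOn_Ici_of_hasDerivAt_nonneg (fun t ht => (hF t ht).sub (hf t ht))
    fun t ht => sub_nonneg.2 ((le_abs_self _).trans (h t ht))
  have hadd := monotoneOn_Ici_of_hasDerivAt_nonneg (fun t ht => (hF t ht).add (hf t ht))
    fun t ht => by linarith [neg_abs_le (f' t), h t ht]
  have h₁ := hsub self_mem_Ici ht ht
  have h₂ := hadd self_mem_Ici ht ht
  simp only [Pi.sub_apply, Pi.add_apply] at h₁ h₂
  exact abs_sub_le_iff.2 ⟨by linarith, by linarith⟩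

theorem hasDerivAt_exp_const_mul (μ t : ℝ) :
    HasDerivAt (fun s => exp (μ * s)) (μ * exp (μ * t)) t := by
  simpa [mul_comm] using ((hasDerivAt_id t).const_mul μ).exp

theorem eq_zero_of_abs_exp_mul_le {μ x C a : ℝ} (hμ : 0 < μ)
    (h : ∀ t ≥ a, |exp (μ * t) * x| ≤ C) : x = 0 := by
  by_contra hx
  have htend : Tendsto (fun t => exp (μ * t) * |x|) atTop atTop :=
    (tendsto_exp_atTop.comp (tendsto_id.const_mul_atTop hμ)).atTop_mul_const (abs_pos.2 hx)
  obtain ⟨t, hta, htC⟩ := ((eventually_ge_atTop a).and (htend.eventually_gt_atTop C)).exists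
  have := h t hta
  rw [abs_mul, abs_of_pos (exp_pos _)] at this
  linarith

theorem eventually_mul_exp_le_of_le {f f' : ℝ → ℝ} {μ c T : ℝ} (hμ : 0 < μ) (hc : 0 < c)
    (hf : ∀ t ≥ T, HasDerivAt f (f' t) t) (hf' : ∀ t ≥ T, c * exp (μ * t) ≤ f' t + μ * f t) :
    ∃ a > 0, ∀ᶠ t in atTop, a * exp (μ * t) ≤ f t := by
  have hsq : ∀ t, exp (2 * μ * t) = exp (μ * t) * exp (μ * t) := fun t => by
    rw [← exp_add]; ring_nf
  obtain ⟨d, hd⟩ : ∃ d, ∀ t ≥ T, c / (2 * μ) * exp (2 * μ * t) + d ≤ exp (μ * t) * f t := by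
    refine ⟨exp (μ * T) * f T - c / (2 * μ) * exp (2 * μ * T), fun t ht => ?_⟩
    have := monotoneOn_Ici_of_hasDerivAt_nonneg
      (f := fun s => exp (μ * s) * f s - c / (2 * μ) * exp (2 * μ * s))
      (fun s hs => ((hasDerivAt_exp_const_mul μ s).mul (hf s hs)).sub
        ((hasDerivAt_exp_const_mul (2 * μ) s).const_mul _))
      (fun s hs => by
        rw [hsq]
        field_simp
        nlinarith [hf' s hs, exp_pos (μ * s)])
      self_mem_Ici ht ht
    simp only at this
    linarith
  set a := c / (4 * μ)
  have ha : 0 < a := by positivity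
  have h2a : c / (2 * μ) = 2 * a := by simp only [a]; field_simp; ring
  have hexp : Tendsto (fun t => exp (2 * μ * t)) atTop atTop :=
    tendsto_exp_atTop.comp (tendsto_id.const_mul_atTop (by positivity))
  refine ⟨a, ha, ?_⟩
  filter_upwards [eventually_ge_atTop T, hexp.eventually_ge_atTop (-d / a)] with t ht hlarge
  rw [div_le_iff₀ ha, hsq] at hlarge
  have := hd t ht
  rw [hsq, h2a] at this
  refine le_of_mul_le_mul_left ?_ (exp_pos (μ * t))
  linarith [show exp (μ * t) * (a * exp (μ * t)) = exp (μ * t) * exp (μ * t) * a by ring]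

theorem tendsto_exp_mul_abs_atTop_of_le {y : ℝ → ℝ} {a s μ μ' : ℝ} (ha : 0 < a) (hμ' : μ' < μ)
    (h : ∀ᶠ t in atTop, a * exp (μ * t) ≤ |t ^ s * y t|) :
    Tendsto (fun t => exp (-μ' * t) * |y t|) atTop atTop := by
  refine tendsto_atTop_mono' atTop ?_
    ((tendsto_exp_mul_div_rpow_atTop s (μ - μ') (sub_pos.2 hμ')).const_mul_atTop ha)
  filter_upwards [h, eventually_gt_atTop 0] with t ht htpos
  have hts : 0 < t ^ s := rpow_pos_of_pos htpos s
  rw [abs_mul, abs_of_pos hts] at ht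
  rw [sub_mul, sub_eq_add_neg, exp_add, ← mul_div_assoc, div_le_iff₀ hts, neg_mul]
  calc a * (exp (μ * t) * exp (-(μ' * t))) = a * exp (μ * t) * exp (-(μ' * t)) := by ring
    _ ≤ t ^ s * |y t| * exp (-(μ' * t)) := by gcongr
    _ = exp (-(μ' * t)) * |y t| * t ^ s := by ring

theorem exists_subset_span_singleton_of_det_eq_zero {K : Type*} [Field K] {S : Set (K × K)}
    (hS : ∀ p ∈ S, ∀ q ∈ S, p.1 * q.2 - p.2 * q.1 = 0) : ∃ p : K × K, S ⊆ K ∙ p := by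
  by_cases h : ∃ p ∈ S, p ≠ 0
  · obtain ⟨p, hpS, hp⟩ := h
    refine ⟨p, fun q hq => Submodule.mem_span_singleton.2 ?_⟩
    have hdet := hS p hpS q hq
    by_cases hp₁ : p.1 = 0
    · have hp₂ : p.2 ≠ 0 := fun hp₂ => hp (Prod.ext hp₁ hp₂)
      have hq₁ : q.1 = 0 := by simpa [hp₁, hp₂] using hdet
      exact ⟨q.2 / p.2, Prod.ext (by simp [hp₁, hq₁]) (by simp [hp₂])⟩
    · refine ⟨q.1 / p.1, Prod.ext (by simp [hp₁]) ?_⟩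
      simp only [Prod.smul_snd, smul_eq_mul]
      field_simp
      linear_combination -hdet
  · push Not at h
    exact ⟨0, fun q hq => by simp [h q hq]⟩

def IsNormalFormSolution (q : ℝ → ℝ) (t₀ : ℝ) (v v' : ℝ → ℝ) : Prop :=
  (∀ t ≥ t₀, HasDerivAt v (v' t) t) ∧ (∀ t ≥ t₀, HasDerivAt v' (q t * v t) t)

def IsRecessive (μ t₀ : ℝ) (v v' : ℝ → ℝ) : Prop :=
  ∃ C, ∀ t ≥ t₀, |exp (μ * t) * v t| ≤ C ∧ |exp (μ * t) * (v' t - μ * v t)| ≤ C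

namespace IsNormalFormSolution

variable {q : ℝ → ℝ} {t₀ μ : ℝ} {v v' : ℝ → ℝ}

theorem neg (h : IsNormalFormSolution q t₀ v v') : IsNormalFormSolution q t₀ (-v) (-v') :=
  ⟨fun t ht => (h.1 t ht).neg, fun t ht => by simpa using (h.2 t ht).neg⟩

theorem wronskian_eq {v₁ v₁' v₂ v₂' : ℝ → ℝ} (h₁ : IsNormalFormSolution q t₀ v₁ v₁')
    (h₂ : IsNormalFormSolution q t₀ v₂ v₂') {t : ℝ} (ht : t₀ ≤ t) :
    v₁ t * v₂' t - v₁' t * v₂ t = v₁ t₀ * v₂' t₀ - v₁' t₀ * v₂ t₀ := by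
  have hW : ∀ s ≥ t₀, HasDerivAt (fun s => v₁ s * v₂' s - v₁' s * v₂ s) 0 s := fun s hs =>
    (((h₁.1 s hs).mul (h₂.2 s hs)).sub ((h₁.2 s hs).mul (h₂.1 s hs))).congr_deriv (by ring)
  exact constant_of_has_deriv_right_zero
    (fun s hs => (hW s hs.1).continuousAt.continuousWithinAt)
    (fun s hs => (hW s hs.1).hasDerivWithinAt) t ⟨ht, le_rfl⟩

theorem monotoneOn_mul_add (h : IsNormalFormSolution q t₀ v v')
    (hq : ∀ t ≥ t₀, μ ^ 2 ≤ q t) :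
    MonotoneOn (fun t => v t * (v' t + μ * v t)) (Ici t₀) := by
  refine monotoneOn_Ici_of_hasDerivAt_nonneg (f' := fun t =>
    (v' t + μ * v t) ^ 2 + (q t - μ ^ 2) * v t ^ 2) (fun t ht => ?_) (fun t ht => ?_)
  · exact ((h.1 t ht).mul ((h.2 t ht).add ((h.1 t ht).const_mul μ))).congr_deriv
      (by simp only [Pi.add_apply]; ring)
  · have := sub_nonneg.2 (hq t ht)
    positivity

theorem pos_of_mul_add_pos (h : IsNormalFormSolution q t₀ v v') (hq : ∀ t ≥ t₀, μ ^ 2 ≤ q t)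
    {T : ℝ} (hT : t₀ ≤ T) (hvT : 0 < v T) (hPT : 0 < v T * (v' T + μ * v T)) {t : ℝ}
    (ht : T ≤ t) : 0 < v t ∧ 0 < v' t + μ * v t := by
  have hP : ∀ s ≥ T, 0 < v s * (v' s + μ * v s) := fun s hs =>
    hPT.trans_le (h.monotoneOn_mul_add hq hT (hT.trans hs) hs)
  have hv : 0 < v t := by
    by_contra! hvt
    obtain ⟨s, hs, hvs⟩ := intermediate_value_Icc' ht
      (fun s hs => (h.1 s (hT.trans hs.1)).continuousAt.continuousWithinAt) ⟨hvt, hvT.le⟩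
    simpa [hvs] using hP s hs.1
  exact ⟨hv, pos_of_mul_pos_right (hP t ht) hv.le⟩

theorem monotoneOn_exp_neg_mul_add (h : IsNormalFormSolution q t₀ v v')
    (hq : ∀ t ≥ t₀, μ ^ 2 ≤ q t) {T : ℝ} (hT : t₀ ≤ T) (hvT : 0 < v T)
    (hPT : 0 < v T * (v' T + μ * v T)) :
    MonotoneOn (fun t => exp (-μ * t) * (v' t + μ * v t)) (Ici T) :=
  monotoneOn_Ici_of_hasDerivAt_nonneg
    (fun s hs => ((hasDerivAt_exp_const_mul (-μ) s).mul
      ((h.2 s (hT.trans hs)).add ((h.1 s (hT.trans hs)).const_mul μ))).congr_deriv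
        (show _ = exp (-μ * s) * ((q s - μ ^ 2) * v s) by simp only [Pi.add_apply]; ring))
    (fun s hs => mul_nonneg (exp_pos _).le (mul_nonneg (sub_nonneg.2 (hq s (hT.trans hs)))
      (h.pos_of_mul_add_pos hq hT hvT hPT hs).1.le))

theorem eventually_le_of_pos (h : IsNormalFormSolution q t₀ v v') (hμ : 0 < μ)
    (hq : ∀ t ≥ t₀, μ ^ 2 ≤ q t) {T : ℝ} (hT : t₀ ≤ T) (hvT : 0 < v T)
    (hPT : 0 < v T * (v' T + μ * v T)) :
    ∃ a > 0, ∀ᶠ t in atTop, a * exp (μ * t) ≤ v t := by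
  refine eventually_mul_exp_le_of_le hμ
    (mul_pos (exp_pos (-μ * T)) (h.pos_of_mul_add_pos hq hT hvT hPT le_rfl).2)
    (fun t ht => h.1 t (hT.trans ht)) fun t ht => ?_
  have := h.monotoneOn_exp_neg_mul_add hq hT hvT hPT self_mem_Ici ht ht
  calc exp (-μ * T) * (v' T + μ * v T) * exp (μ * t)
      ≤ exp (-μ * t) * (v' t + μ * v t) * exp (μ * t) := by gcongr
    _ = v' t + μ * v t := by rw [mul_right_comm, ← exp_add]; simp

theorem eventually_le_abs (h : IsNormalFormSolution q t₀ v v') (hμ : 0 < μ)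
    (hq : ∀ t ≥ t₀, μ ^ 2 ≤ q t) {T : ℝ} (hT : t₀ ≤ T) (hPT : 0 < v T * (v' T + μ * v T)) :
    ∃ a > 0, ∀ᶠ t in atTop, a * exp (μ * t) ≤ |v t| := by
  wlog hvT : 0 < v T generalizing v v'
  · have hvT' : 0 < -v T := neg_pos.2 <| (le_of_not_gt hvT).lt_of_ne fun h0 => by simp [h0] at hPT
    simpa using this h.neg (by simpa [mul_add] using hPT) hvT'
  obtain ⟨a, ha, hle⟩ := h.eventually_le_of_pos hμ hq hT hvT hPT
  exact ⟨a, ha, hle.mono fun t ht => ht.trans (le_abs_self _)⟩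

theorem abs_exp_mul_le (h : IsNormalFormSolution q t₀ v v')
    (hP : ∀ t ≥ t₀, v t * (v' t + μ * v t) ≤ 0) {t : ℝ} (ht : t₀ ≤ t) :
    |exp (μ * t) * v t| ≤ |exp (μ * t₀) * v t₀| := by
  refine sq_le_sq.1 (antitoneOn_Ici_of_hasDerivAt_nonpos (f := fun s => (exp (μ * s) * v s) ^ 2)
    (f' := fun s => 2 * exp (μ * s) ^ 2 * (v s * (v' s + μ * v s)))
    (fun s hs => (((hasDerivAt_exp_const_mul μ s).mul (h.1 s hs)).pow 2).congr_deriv ?_)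
    (fun s hs => ?_) self_mem_Ici ht ht)
  · simp only [Pi.mul_apply]; ring
  · nlinarith [hP s hs, sq_nonneg (exp (μ * s))]

theorem isRecessive (h : IsNormalFormSolution q t₀ v v') (ht₀ : 0 < t₀) {c : ℝ}
    (hq : ∀ t ≥ t₀, |q t - μ ^ 2| ≤ c / t ^ 2)
    (hP : ∀ t ≥ t₀, v t * (v' t + μ * v t) ≤ 0) : IsRecessive μ t₀ v v' := by
  have hc : 0 ≤ c := by
    have := (abs_nonneg _).trans (hq t₀ le_rfl)
    exact ((div_nonneg_iff.1 this).resolve_right fun h => (pow_pos ht₀ 2).not_ge h.2).1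
  set K := |exp (μ * t₀) * v t₀|
  have hK := fun t (ht : t ≥ t₀) => h.abs_exp_mul_le hP ht
  set w₀ := exp (μ * t₀) * (v' t₀ - μ * v t₀)
  have hw : ∀ t ≥ t₀, |exp (μ * t) * (v' t - μ * v t) - w₀| ≤ c * K * (t₀⁻¹ - t⁻¹) := by
    refine fun t ht => (abs_sub_le_of_abs_hasDerivAt_le
      (f' := fun s => (q s - μ ^ 2) * (exp (μ * s) * v s))
      (fun s hs => ((hasDerivAt_exp_const_mul μ s).mul
        ((h.2 s hs).sub ((h.1 s hs).const_mul μ))).congr_deriv ?_)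
      (fun s hs => ((hasDerivAt_inv (ht₀.trans_le hs).ne').const_mul (-(c * K))))
      (fun s hs => ?_) ht).trans_eq (by ring)
    · simp only [Pi.sub_apply]; ring
    · have hs₀ : 0 < s := ht₀.trans_le hs
      calc |(q s - μ ^ 2) * (exp (μ * s) * v s)| ≤ c / s ^ 2 * K := by
            rw [abs_mul]
            exact mul_le_mul (hq s hs) (hK s hs) (abs_nonneg _) (by positivity)
        _ = -(c * K) * -(s ^ 2)⁻¹ := by ring
  refine ⟨K + |w₀| + c * K * t₀⁻¹, fun t ht => ⟨?_, ?_⟩⟩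
  · have : 0 ≤ |w₀| + c * K * t₀⁻¹ := by positivity
    linarith [hK t ht]
  · have : 0 ≤ K + c * K * t⁻¹ := by have := ht₀.trans_le ht; positivity
    linarith [abs_sub_abs_le_abs_sub (exp (μ * t) * (v' t - μ * v t)) w₀, hw t ht]

theorem wronskian_eq_zero {v₁ v₁' v₂ v₂' : ℝ → ℝ} (hμ : 0 < μ)
    (h₁ : IsNormalFormSolution q t₀ v₁ v₁') (h₂ : IsNormalFormSolution q t₀ v₂ v₂')
    (hr₁ : IsRecessive μ t₀ v₁ v₁') (hr₂ : IsRecessive μ t₀ v₂ v₂') :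
    v₁ t₀ * v₂' t₀ - v₁' t₀ * v₂ t₀ = 0 := by
  obtain ⟨C₁, hC₁⟩ := hr₁
  obtain ⟨C₂, hC₂⟩ := hr₂
  refine eq_zero_of_abs_exp_mul_le (by positivity : 0 < 2 * μ) (a := t₀) (C := 2 * C₁ * C₂)
    fun t ht => ?_
  obtain ⟨hv₁, hw₁⟩ := hC₁ t ht
  obtain ⟨hv₂, hw₂⟩ := hC₂ t ht
  have hW : exp (2 * μ * t) * (v₁ t₀ * v₂' t₀ - v₁' t₀ * v₂ t₀) =
      exp (μ * t) * v₁ t * (exp (μ * t) * (v₂' t - μ * v₂ t)) -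
        exp (μ * t) * (v₁' t - μ * v₁ t) * (exp (μ * t) * v₂ t) := by
    rw [← h₁.wronskian_eq h₂ ht, show 2 * μ * t = μ * t + μ * t by ring, exp_add]
    ring
  rw [hW, show 2 * C₁ * C₂ = C₁ * C₂ + C₁ * C₂ by ring]
  refine (abs_sub _ _).trans (add_le_add ?_ ?_) <;> rw [abs_mul]
  · exact mul_le_mul hv₁ hw₂ (abs_nonneg _) ((abs_nonneg _).trans hv₁)
  · exact mul_le_mul hw₁ hv₂ (abs_nonneg _) ((abs_nonneg _).trans hw₁)

theorem eventually_le_abs_or_isRecessive (h : IsNormalFormSolution q t₀ v v') (hμ : 0 < μ)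
    (ht₀ : 0 < t₀) {c : ℝ} (hq : ∀ t ≥ t₀, μ ^ 2 ≤ q t)
    (hq' : ∀ t ≥ t₀, |q t - μ ^ 2| ≤ c / t ^ 2) :
    (∃ a > 0, ∀ᶠ t in atTop, a * exp (μ * t) ≤ |v t|) ∨ IsRecessive μ t₀ v v' := by
  by_cases hP : ∃ T ≥ t₀, 0 < v T * (v' T + μ * v T)
  · obtain ⟨T, hT, hPT⟩ := hP
    exact Or.inl (h.eventually_le_abs hμ hq hT hPT)
  · push Not at hP
    exact Or.inr (h.isRecessive ht₀ hq' hP)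

end IsNormalFormSolution

namespace IsModalSolution

variable {lam t₀ : ℝ} {y y' : ℝ → ℝ}

theorem isNormalFormSolution (h : IsModalSolution lam t₀ y y') (ht₀ : 0 < t₀) :
    IsNormalFormSolution (fun t => 3 / (4 * t ^ 2) - lam) t₀ (fun t => t ^ (3 / 2 : ℝ) * y t)
      (fun t => 3 / 2 * t ^ (1 / 2 : ℝ) * y t + t ^ (3 / 2 : ℝ) * y' t) := by
  have hrpow : ∀ p : ℝ, ∀ t ≥ t₀, HasDerivAt (fun s => s ^ p) (p * t ^ (p - 1)) t :=
    fun p t ht => hasDerivAt_rpow_const (Or.inl (ht₀.trans_le ht).ne')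
  refine ⟨fun t ht => ?_, fun t ht => ?_⟩
  · exact ((hrpow (3 / 2) t ht).mul (h.1 t ht)).congr_deriv (by norm_num)
  · have ht' : 0 < t := ht₀.trans_le ht
    refine ((((hrpow (1 / 2) t ht).const_mul (3 / 2)).mul (h.1 t ht)).add
      ((hrpow (3 / 2) t ht).mul (h.2 t ht))).congr_deriv ?_
    have h32 : t ^ (3 / 2 - 1 : ℝ) = t ^ (1 / 2 : ℝ) := by norm_num
    have h12 : t ^ (1 / 2 - 1 : ℝ) = (t ^ (1 / 2 : ℝ))⁻¹ := by
      rw [← rpow_neg ht'.le]; norm_num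
    have h3 : t ^ (3 / 2 : ℝ) = t * t ^ (1 / 2 : ℝ) := by
      rw [← rpow_one_add' ht'.le (by norm_num)]; norm_num
    have hss : t ^ (1 / 2 : ℝ) * t ^ (1 / 2 : ℝ) = t := by
      rw [← rpow_add ht']; norm_num
    have hs : 0 < t ^ (1 / 2 : ℝ) := rpow_pos_of_pos ht' _
    beta_reduce
    rw [h32, h12, h3]
    generalize t ^ (1 / 2 : ℝ) = s at hs hss ⊢
    subst hss
    field_simp
    ring

theorem isRecessive_of_not_tendsto {μ : ℝ} (h : IsModalSolution (-μ ^ 2) t₀ y y') (hμ : 0 < μ)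
    (ht₀ : 0 < t₀) (hy : ¬ ∀ μ' < μ, Tendsto (fun t => exp (-μ' * t) * |y t|) atTop atTop) :
    IsRecessive μ t₀ (fun t => t ^ (3 / 2 : ℝ) * y t)
      (fun t => 3 / 2 * t ^ (1 / 2 : ℝ) * y t + t ^ (3 / 2 : ℝ) * y' t) := by
  have hq : ∀ t, 3 / (4 * t ^ 2) - -μ ^ 2 - μ ^ 2 = 3 / 4 / t ^ 2 := fun t => by ring
  refine ((h.isNormalFormSolution ht₀).eventually_le_abs_or_isRecessive hμ ht₀ (c := 3 / 4)
    (fun t _ => ?_) (fun t _ => ?_)).resolve_left ?_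
  · linarith [hq t, show 0 ≤ 3 / 4 / t ^ 2 by positivity]
  · rw [hq, abs_of_nonneg (by positivity)]
  · rintro ⟨a, ha, hle⟩
    exact hy fun μ' hμ' => tendsto_exp_mul_abs_atTop_of_le ha hμ' hle

theorem wronskian_eq_zero_of_not_tendsto {μ : ℝ} {y₁ y₁' y₂ y₂' : ℝ → ℝ} (hμ : 0 < μ)
    (ht₀ : 0 < t₀) (h₁ : IsModalSolution (-μ ^ 2) t₀ y₁ y₁')
    (h₂ : IsModalSolution (-μ ^ 2) t₀ y₂ y₂')
    (hy₁ : ¬ ∀ μ' < μ, Tendsto (fun t => exp (-μ' * t) * |y₁ t|) atTop atTop)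
    (hy₂ : ¬ ∀ μ' < μ, Tendsto (fun t => exp (-μ' * t) * |y₂ t|) atTop atTop) :
    y₁ t₀ * y₂' t₀ - y₁' t₀ * y₂ t₀ = 0 := by
  have hW := (h₁.isNormalFormSolution ht₀).wronskian_eq_zero hμ (h₂.isNormalFormSolution ht₀)
    (h₁.isRecessive_of_not_tendsto hμ ht₀ hy₁) (h₂.isRecessive_of_not_tendsto hμ ht₀ hy₂)
  have hs : t₀ ^ (3 / 2 : ℝ) ≠ 0 := (rpow_pos_of_pos ht₀ _).ne'
  exact (mul_eq_zero.1 (by linear_combination hW)).resolve_left (pow_ne_zero 2 hs)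

end IsModalSolution

/-- for `lam = -μ² < 0` (μ > 0), there is a linear subspace `L ⊆ ℝ²` of
dimension at most 1 such that every real solution of the modal equation whose initial
data `(y(t₀), y'(t₀))` lies outside `L` grows exponentially at rate `μ`:
`e^{-μ' t} |y(t)| → ∞` for every `μ' < μ`. -/
theorem stmt_2 (μ t₀ : ℝ) (hμ : 0 < μ) (ht₀ : 0 < t₀) :
    ∃ L : Submodule ℝ (ℝ × ℝ), Module.finrank ℝ L ≤ 1 ∧
      ∀ y y' : ℝ → ℝ, IsModalSolution (-μ ^ 2) t₀ y y' →
        (y t₀, y' t₀) ∉ L →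
        ∀ μ' : ℝ, μ' < μ →
          Tendsto (fun t => Real.exp (-μ' * t) * |y t|) atTop atTop := by
  obtain ⟨p, hp⟩ := exists_subset_span_singleton_of_det_eq_zero (S := {p : ℝ × ℝ |
    ∃ y y', IsModalSolution (-μ ^ 2) t₀ y y' ∧ (y t₀, y' t₀) = p ∧
      ¬ ∀ μ' < μ, Tendsto (fun t => exp (-μ' * t) * |y t|) atTop atTop}) <| by
    rintro _ ⟨y₁, y₁', h₁, rfl, hy₁⟩ _ ⟨y₂, y₂', h₂, rfl, hy₂⟩
    exact IsModalSolution.wronskian_eq_zero_of_not_tendsto hμ ht₀ h₁ h₂ hy₁ hy₂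
  refine ⟨ℝ ∙ p, (finrank_span_le_card {p}).trans (by simp), fun y y' hy hL => ?_⟩
  by_contra hgrowth
  exact hL (hp ⟨y, y', hy, rfl, hgrowth⟩)
end

section
/- Let μ > 0 and t₀ ≥ 6/μ + 1. Let (ξ, ζ) : [t₀, ∞) → ℝ² be continuously differentiable with ξ'(t) = ζ(t) and ζ'(t) = −(3/t)ζ(t) + μ²ξ(t) for all t ≥ t₀ (the modal system for eigenvalue λ = −μ²). Define the open region Ω = {(ξ, ζ) ∈ ℝ² : ξ > 0 and ζ > μξ/3} and the Chetaev function W(t) = ξ(t)ζ(t) + (μ/3)ξ(t)² − ξ(t)²/(2t). If (ξ(t₀), ζ(t₀)) ∈ Ω, then: (a) (ξ(t), ζ(t)) ∈ Ω for all t ≥ t₀; (b) W(t) > 0 and W'(t) ≥ (μ/6)·W(t) for all t ≥ t₀, hence W(t) ≥ W(t₀)·e^{(μ/6)(t − t₀)}; (c) ξ(t) → ∞ as t → ∞. -/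
/-!
While the trajectory stays in the closure of `Ω`, the gap `u = ζ - μξ/3` satisfies
`u' ≥ -(5μ/6) u` and `ξ' = ζ ≥ (μ/3) ξ`, so neither `ξ` nor `u` can vanish at a first exit time
from the open region `Ω`. Inside `Ω` and for `μt ≥ 6`, the orbital derivative of the Chetaev
function `W` dominates `(μ/6) W`. The exponential bound on `W` and `ξ → ∞` then follow from the
comparison `f' ≥ c f ⟹ f(b) ≥ f(a) e^{c(b-a)}`.
-/

open Filter Set Real

theorem mul_exp_le_of_mul_le_hasDerivAt {f f' : ℝ → ℝ} {a b c : ℝ} (hab : a ≤ b)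
    (hf : ∀ x ∈ Icc a b, HasDerivAt f (f' x) x) (hf' : ∀ x ∈ Ioo a b, c * f x ≤ f' x) :
    f a * exp (c * (b - a)) ≤ f b := by
  set g : ℝ → ℝ := fun x => f x * exp (-c * (x - a))
  have hg : ∀ x ∈ Icc a b, HasDerivAt g ((f' x - c * f x) * exp (-c * (x - a))) x := by
    intro x hx
    exact ((hf x hx).mul (((hasDerivAt_id x).sub_const a).const_mul (-c)).exp).congr_deriv
      (by simp only [id]; ring)
  have hmono : MonotoneOn g (Icc a b) := by
    refine monotoneOn_of_hasDerivWithinAt_nonneg (convex_Icc a b)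
      (f' := fun x => (f' x - c * f x) * exp (-c * (x - a)))
      (fun x hx => (hg x hx).continuousAt.continuousWithinAt) (fun x hx => ?_) (fun x hx => ?_)
    · rw [interior_Icc] at hx ⊢
      exact (hg x (Ioo_subset_Icc_self hx)).hasDerivWithinAt
    · rw [interior_Icc] at hx
      exact mul_nonneg (sub_nonneg.2 (hf' x hx)) (exp_pos _).le
  have hgab : f a ≤ f b * exp (-c * (b - a)) := by
    simpa [g] using hmono (left_mem_Icc.2 hab) (right_mem_Icc.2 hab) hab
  calc f a * exp (c * (b - a)) ≤ f b * exp (-c * (b - a)) * exp (c * (b - a)) :=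
        mul_le_mul_of_nonneg_right hgab (exp_pos _).le
    _ = f b := by rw [mul_assoc, ← exp_add, neg_mul, neg_add_cancel, exp_zero, mul_one]

theorem tendsto_atTop_of_mul_le_hasDerivAt {f f' : ℝ → ℝ} {a c : ℝ} (hc : 0 < c)
    (hf : ∀ x, a ≤ x → HasDerivAt f (f' x) x) (hf' : ∀ x, a < x → c * f x ≤ f' x)
    (ha : 0 < f a) : Tendsto f atTop atTop := by
  have hlin : Tendsto (fun x => c * (x - a)) atTop atTop :=
    (tendsto_atTop_add_const_right _ _ tendsto_id).const_mul_atTop hc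
  refine tendsto_atTop_mono' atTop ?_ ((tendsto_exp_atTop.comp hlin).const_mul_atTop ha)
  filter_upwards [eventually_ge_atTop a] with x hx
  exact mul_exp_le_of_mul_le_hasDerivAt hx (fun y hy => hf y hy.1) fun y hy => hf' y hy.1

theorem IsOpen.mapsTo_Ici_of_continuousOn {E : Type*} [TopologicalSpace E] {γ : ℝ → E}
    {U : Set E} {a : ℝ} (hU : IsOpen U) (hγ : ContinuousOn γ (Ici a)) (ha : γ a ∈ U)
    (hexit : ∀ b, a < b → MapsTo γ (Ico a b) U → γ b ∈ U) : MapsTo γ (Ici a) U := by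
  intro t ht
  by_contra hγt
  set S := Icc a t ∩ γ ⁻¹' Uᶜ
  have hSbdd : BddBelow S := ⟨a, fun s hs => hs.1.1⟩
  -- `sInf S` is the first exit time; it is attained since `Uᶜ` is closed.
  have hτ : sInf S ∈ S :=
    ((hγ.mono Icc_subset_Ici_self).preimage_isClosed_of_isClosed isClosed_Icc
      hU.isClosed_compl).csInf_mem ⟨t, ⟨ht, le_rfl⟩, hγt⟩ hSbdd
  have haτ : a < sInf S := lt_of_le_of_ne hτ.1.1 fun h => hτ.2 (h ▸ ha)
  refine hτ.2 (hexit _ haτ fun s hs => ?_)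
  by_contra hs'
  exact (csInf_le hSbdd ⟨⟨hs.1, hs.2.le.trans hτ.1.2⟩, hs'⟩).not_gt hs.2

def chetaevRegion (μ : ℝ) : Set (ℝ × ℝ) := {p | 0 < p.1 ∧ μ * p.1 / 3 < p.2}

theorem isOpen_chetaevRegion (μ : ℝ) : IsOpen (chetaevRegion μ) :=
  (isOpen_lt continuous_const continuous_fst).inter
    (isOpen_lt (continuous_const.mul continuous_fst |>.div_const 3) continuous_snd)

noncomputable def chetaev (μ t x z : ℝ) : ℝ := x * z + μ / 3 * x ^ 2 - x ^ 2 / (2 * t)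

/-- The derivative of `t ↦ chetaev μ t (ξ t) (ζ t)` along solutions of the modal system. -/
noncomputable def chetaevOrbitalDeriv (μ t x z : ℝ) : ℝ :=
  z ^ 2 + μ ^ 2 * x ^ 2 + (2 * μ / 3 - 4 / t) * (x * z) + x ^ 2 / (2 * t ^ 2)

section Estimates

variable {μ t x z : ℝ}

theorem pos_of_six_le_mul (hμ : 0 < μ) (ht : 6 ≤ μ * t) : 0 < t :=
  pos_of_mul_pos_right (by linarith) hμ.le

theorem neg_mul_le_modal_gap_deriv (hμ : 0 < μ) (ht : 6 ≤ μ * t) (hx : 0 ≤ x)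
    (hz : μ * x / 3 ≤ z) :
    -(5 * μ / 6) * (z - μ * x / 3) ≤ -(3 / t) * z + μ ^ 2 * x - μ * z / 3 := by
  have h3t : 3 / t ≤ μ / 2 := by
    rw [div_le_iff₀ (pos_of_six_le_mul hμ ht)]
    linarith
  have hz0 : 0 ≤ z := le_trans (by positivity) hz
  nlinarith [mul_nonneg (sub_nonneg.2 h3t) hz0, mul_nonneg (sq_nonneg μ) hx]

theorem chetaev_pos (hμ : 0 < μ) (ht : 6 ≤ μ * t) (hx : 0 < x) (hz : 0 ≤ z) :
    0 < chetaev μ t x z := by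
  have hquad : x ^ 2 / (2 * t) ≤ μ * x ^ 2 / 12 := by
    rw [div_le_div_iff₀ (by linarith [pos_of_six_le_mul hμ ht]) (by norm_num)]
    nlinarith [sq_nonneg x]
  unfold chetaev
  nlinarith [mul_nonneg hx.le hz, mul_pos hμ (pow_pos hx 2)]

theorem mul_chetaev_le_chetaevOrbitalDeriv (hμ : 0 < μ) (ht : 6 ≤ μ * t) (hx : 0 ≤ x)
    (hz : 0 ≤ z) : μ / 6 * chetaev μ t x z ≤ chetaevOrbitalDeriv μ t x z := by
  have ht0 := pos_of_six_le_mul hμ ht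
  have h4t : 4 / t ≤ 2 * μ / 3 := by
    rw [div_le_iff₀ ht0]
    linarith
  have hgap : chetaevOrbitalDeriv μ t x z - μ / 6 * chetaev μ t x z =
      (z - μ * x / 12) ^ 2 + 135 / 144 * μ ^ 2 * x ^ 2 + (2 * μ / 3 - 4 / t) * (x * z)
        + x ^ 2 / (2 * t ^ 2) + μ * x ^ 2 / (12 * t) := by
    unfold chetaev chetaevOrbitalDeriv
    field_simp
    ring
  rw [← sub_nonneg, hgap]
  positivity

end Estimates

section ModalSystem

variable {μ t₀ : ℝ} {ξ ζ : ℝ → ℝ}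

theorem hasDerivAt_chetaev {t : ℝ} (ht : t ≠ 0) (hξ : HasDerivAt ξ (ζ t) t)
    (hζ : HasDerivAt ζ (-(3 / t) * ζ t + μ ^ 2 * ξ t) t) :
    HasDerivAt (fun s => chetaev μ s (ξ s) (ζ s))
      (chetaevOrbitalDeriv μ t (ξ t) (ζ t)) t := by
  have hden : HasDerivAt (fun s : ℝ => 2 * s) 2 t := by
    simpa using (hasDerivAt_id t).const_mul (2 : ℝ)
  refine (((hξ.mul hζ).add ((hξ.pow 2).const_mul (μ / 3))).sub
    ((hξ.pow 2).div hden (by simpa using ht))).congr_deriv ?_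
  unfold chetaevOrbitalDeriv
  simp only [Pi.pow_apply]
  field_simp
  ring

theorem modal_mapsTo_chetaevRegion (hμ : 0 < μ) (hμt₀ : 6 ≤ μ * t₀)
    (hξ : ∀ t, t₀ ≤ t → HasDerivAt ξ (ζ t) t)
    (hζ : ∀ t, t₀ ≤ t → HasDerivAt ζ (-(3 / t) * ζ t + μ ^ 2 * ξ t) t)
    (h₀ : (ξ t₀, ζ t₀) ∈ chetaevRegion μ) :
    MapsTo (fun t => (ξ t, ζ t)) (Ici t₀) (chetaevRegion μ) := by
  refine (isOpen_chetaevRegion μ).mapsTo_Ici_of_continuousOn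
    (fun t ht => ((hξ t ht).continuousAt.prodMk (hζ t ht).continuousAt).continuousWithinAt)
    h₀ fun b hb hΩ => ?_
  have hΩ' : ∀ s ∈ Ioo t₀ b, 0 ≤ ξ s ∧ μ * ξ s / 3 ≤ ζ s := fun s hs =>
    ⟨(hΩ ⟨hs.1.le, hs.2⟩).1.le, (hΩ ⟨hs.1.le, hs.2⟩).2.le⟩
  have hξb := mul_exp_le_of_mul_le_hasDerivAt (c := μ / 3) hb.le (fun s hs => hξ s hs.1)
    fun s hs => by linarith [(hΩ' s hs).2]
  have hgapb := mul_exp_le_of_mul_le_hasDerivAt (c := -(5 * μ / 6)) hb.le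
    (f := fun s => ζ s - μ * ξ s / 3)
    (fun s hs => (hζ s hs.1).sub ((hξ s hs.1).const_mul μ |>.div_const 3))
    fun s hs => neg_mul_le_modal_gap_deriv hμ
      (hμt₀.trans (mul_le_mul_of_nonneg_left hs.1.le hμ.le)) (hΩ' s hs).1 (hΩ' s hs).2
  exact ⟨(mul_pos h₀.1 (exp_pos _)).trans_le hξb,
    sub_pos.1 ((mul_pos (sub_pos.2 h₀.2) (exp_pos _)).trans_le hgapb)⟩

end ModalSystem

/-- Chetaev analysis of the modal system `ξ' = ζ`, `ζ' = -(3/t) ζ + μ² ξ`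
(eigenvalue `λ = -μ²`) for `μ > 0` and `t₀ ≥ 6/μ + 1`. If the initial data lies in the
region `Ω = {ξ > 0, ζ > μξ/3}`, then (a) the trajectory stays in `Ω`; (b) the Chetaev
function `W(t) = ξζ + (μ/3)ξ² - ξ²/(2t)` is positive and satisfies `W' ≥ (μ/6) W`, hence
`W(t) ≥ W(t₀) e^{(μ/6)(t - t₀)}`; (c) `ξ(t) → ∞`. -/
theorem stmt_17 (μ t₀ : ℝ) (hμ : 0 < μ) (ht₀ : 6 / μ + 1 ≤ t₀)
    (ξ ζ : ℝ → ℝ)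
    (hξ : ∀ t, t₀ ≤ t → HasDerivAt ξ (ζ t) t)
    (hζ : ∀ t, t₀ ≤ t → HasDerivAt ζ (-(3 / t) * ζ t + μ ^ 2 * ξ t) t)
    (hinit₁ : 0 < ξ t₀) (hinit₂ : μ * ξ t₀ / 3 < ζ t₀) :
    (∀ t, t₀ ≤ t → 0 < ξ t ∧ μ * ξ t / 3 < ζ t) ∧
    (∀ t, t₀ ≤ t → 0 < ξ t * ζ t + μ / 3 * ξ t ^ 2 - ξ t ^ 2 / (2 * t)) ∧
    (∃ W' : ℝ → ℝ,
      (∀ t, t₀ ≤ t → HasDerivAt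
        (fun s => ξ s * ζ s + μ / 3 * ξ s ^ 2 - ξ s ^ 2 / (2 * s)) (W' t) t) ∧
      (∀ t, t₀ ≤ t →
        μ / 6 * (ξ t * ζ t + μ / 3 * ξ t ^ 2 - ξ t ^ 2 / (2 * t)) ≤ W' t)) ∧
    (∀ t, t₀ ≤ t →
      (ξ t₀ * ζ t₀ + μ / 3 * ξ t₀ ^ 2 - ξ t₀ ^ 2 / (2 * t₀)) * Real.exp (μ / 6 * (t - t₀))
        ≤ ξ t * ζ t + μ / 3 * ξ t ^ 2 - ξ t ^ 2 / (2 * t)) ∧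
    Tendsto ξ atTop atTop := by
  have hμt : ∀ t, t₀ ≤ t → 6 ≤ μ * t := fun t ht =>
    (div_le_iff₀' hμ).1 (by linarith)
  have hΩ := modal_mapsTo_chetaevRegion hμ (hμt t₀ le_rfl) hξ hζ ⟨hinit₁, hinit₂⟩
  have hζ₀ : ∀ t, t₀ ≤ t → 0 ≤ ζ t := fun t ht =>
    le_trans (by have := (hΩ ht).1; positivity) (hΩ ht).2.le
  have hW : ∀ t, t₀ ≤ t → HasDerivAt (fun s => chetaev μ s (ξ s) (ζ s))
      (chetaevOrbitalDeriv μ t (ξ t) (ζ t)) t := fun t ht =>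
    hasDerivAt_chetaev (pos_of_six_le_mul hμ (hμt t ht)).ne' (hξ t ht) (hζ t ht)
  have hW' : ∀ t, t₀ ≤ t → μ / 6 * chetaev μ t (ξ t) (ζ t) ≤
      chetaevOrbitalDeriv μ t (ξ t) (ζ t) := fun t ht =>
    mul_chetaev_le_chetaevOrbitalDeriv hμ (hμt t ht) (hΩ ht).1.le (hζ₀ t ht)
  refine ⟨fun t ht => hΩ ht, fun t ht => chetaev_pos hμ (hμt t ht) (hΩ ht).1 (hζ₀ t ht),
    ⟨_, hW, hW'⟩, fun t ht => mul_exp_le_of_mul_le_hasDerivAt ht (fun s hs => hW s hs.1)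
      fun s hs => hW' s hs.1.le, ?_⟩
  exact tendsto_atTop_of_mul_le_hasDerivAt (c := μ / 3) (by positivity) hξ
    (fun t ht => by linarith [(hΩ ht.le).2]) hinit₁
end
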